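/- arXiv:1910.07211 — 7 statements merged into one kernel-verified Lean document; each statement's English description precedes it below -/
import Mathlib

section
/- Let V be a finite-dimensional real inner product space and L : V → V a self-adjoint linear operator. Let s ≥ 1, let (a_{ij})_{i,j=1}^s and (b_i)_{i=1}^s be real Runge–Kutta coefficients, and define M_{ij} = b_i a_{ij} + b_j a_{ji} − b_i b_j. Given Φⁿ ∈ V, Δt ∈ ℝ, and k_1,…,k_s ∈ V, define the stage values Φ_i = Φⁿ + Δt Σ_{j=1}^s a_{ij} k_j and the update Φ^{n+1} = Φⁿ + Δt Σ_{i=1}^s b_i k_i. Then (1/2)⟨Φ^{n+1}, L Φ^{n+1}⟩ − (1/2)⟨Φⁿ, L Φⁿ⟩ = Δt Σ_{i=1}^s b_i ⟨k_i, L Φ_i⟩ − (Δt²/2) Σ_{i,j=1}^s M_{ij} ⟨k_i, L k_j⟩. -/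
/-!
Write `K = ∑ bᵢ kᵢ`, so that `Φⁿ⁺¹ = Φⁿ + Δt K`. Since `L` is symmetric, the quadratic form
`⟪x, L x⟫` expands as `⟪Φⁿ, L Φⁿ⟫ + 2 Δt ⟪K, L Φⁿ⟫ + Δt² ⟪K, L K⟫`. On the other side,
`∑ bᵢ ⟪kᵢ, L Φᵢ⟫ = ⟪K, L Φⁿ⟫ + Δt ∑ᵢⱼ bᵢ aᵢⱼ ⟪kᵢ, L kⱼ⟫`, and the symmetry of `⟪kᵢ, L kⱼ⟫` in
`i, j` turns `∑ᵢⱼ (bᵢ aᵢⱼ + bⱼ aⱼᵢ) ⟪kᵢ, L kⱼ⟫` into `2 ∑ᵢⱼ bᵢ aᵢⱼ ⟪kᵢ, L kⱼ⟫`; the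
`bᵢ bⱼ` part of `M` is exactly `⟪K, L K⟫`.
-/

open scoped InnerProductSpace

section Bilinear

variable {V : Type*} [NormedAddCommGroup V] [InnerProductSpace ℝ V] (L : V →ₗ[ℝ] V)
  {ι κ : Type*} [Fintype ι] [Fintype κ]

lemma inner_map_sum_smul (u : V) (c : κ → ℝ) (w : κ → V) :
    ⟪u, L (∑ j, c j • w j)⟫_ℝ = ∑ j, c j * ⟪u, L (w j)⟫_ℝ := by
  simp only [map_sum, map_smul, inner_sum, real_inner_smul_right]

lemma sum_smul_inner_map (c : ι → ℝ) (u : ι → V) (v : V) :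
    ⟪∑ i, c i • u i, L v⟫_ℝ = ∑ i, c i * ⟪u i, L v⟫_ℝ := by
  simp only [sum_inner, real_inner_smul_left]

lemma inner_sum_smul_map_sum_smul (c : ι → ℝ) (u : ι → V) (d : κ → ℝ) (w : κ → V) :
    ⟪∑ i, c i • u i, L (∑ j, d j • w j)⟫_ℝ = ∑ i, ∑ j, c i * d j * ⟪u i, L (w j)⟫_ℝ := by
  rw [sum_smul_inner_map]
  simp only [inner_map_sum_smul, Finset.mul_sum, mul_assoc]

end Bilinear

namespace LinearMap.IsSymmetric

variable {V : Type*} [NormedAddCommGroup V] [InnerProductSpace ℝ V] {L : V →ₗ[ℝ] V}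
  (hL : L.IsSymmetric)
include hL

lemma real_inner_map_comm (u v : V) : ⟪u, L v⟫_ℝ = ⟪v, L u⟫_ℝ := by
  rw [← hL, real_inner_comm]

lemma inner_add_smul_map_add_smul (x y : V) (t : ℝ) :
    ⟪x + t • y, L (x + t • y)⟫_ℝ
      = ⟪x, L x⟫_ℝ + 2 * t * ⟪y, L x⟫_ℝ + t ^ 2 * ⟪y, L y⟫_ℝ := by
  simp only [map_add, map_smul, inner_add_left, inner_add_right, real_inner_smul_left,
    real_inner_smul_right, hL.real_inner_map_comm x y]
  ring

lemma sum_sum_add_transpose_mul_inner_map {ι : Type*} [Fintype ι] (c : ι → ι → ℝ)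
    (u : ι → V) :
    ∑ i, ∑ j, (c i j + c j i) * ⟪u i, L (u j)⟫_ℝ = 2 * ∑ i, ∑ j, c i j * ⟪u i, L (u j)⟫_ℝ := by
  have htranspose : ∑ i, ∑ j, c j i * ⟪u i, L (u j)⟫_ℝ = ∑ i, ∑ j, c i j * ⟪u i, L (u j)⟫_ℝ := by
    rw [Finset.sum_comm]
    simp only [hL.real_inner_map_comm (u _) (u _)]
  simp only [add_mul, Finset.sum_add_distrib, htranspose]
  ring

end LinearMap.IsSymmetric

theorem leqrk_energy_identity_general
    {V : Type*} [NormedAddCommGroup V] [InnerProductSpace ℝ V]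
    (L : V →ₗ[ℝ] V) (hL : ∀ u v : V, ⟪L u, v⟫_ℝ = ⟪u, L v⟫_ℝ)
    (s : ℕ) (a : Fin s → Fin s → ℝ) (b : Fin s → ℝ)
    (Φn : V) (Δt : ℝ) (k : Fin s → V)
    (Φ : Fin s → V) (hΦ : ∀ i, Φ i = Φn + Δt • ∑ j, a i j • k j)
    (Φn1 : V) (hΦn1 : Φn1 = Φn + Δt • ∑ i, b i • k i) :
    (1/2) * ⟪Φn1, L Φn1⟫_ℝ - (1/2) * ⟪Φn, L Φn⟫_ℝ
      = Δt * ∑ i, b i * ⟪k i, L (Φ i)⟫_ℝ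
        - (Δt ^ 2 / 2) * ∑ i, ∑ j,
            (b i * a i j + b j * a j i - b i * b j) * ⟪k i, L (k j)⟫_ℝ := by
  have hL : L.IsSymmetric := hL
  have hstages : ∑ i, b i * ⟪k i, L (Φ i)⟫_ℝ
      = ⟪∑ i, b i • k i, L Φn⟫_ℝ + Δt * ∑ i, ∑ j, b i * a i j * ⟪k i, L (k j)⟫_ℝ := by
    simp only [hΦ, map_add, map_smul, inner_add_right, real_inner_smul_right,
      inner_map_sum_smul, sum_smul_inner_map, mul_add, Finset.sum_add_distrib,
      Finset.mul_sum]
    congr 1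
    exact Finset.sum_congr rfl fun i _ => Finset.sum_congr rfl fun j _ => by ring
  have hM : ∑ i, ∑ j, (b i * a i j + b j * a j i - b i * b j) * ⟪k i, L (k j)⟫_ℝ
      = 2 * ∑ i, ∑ j, b i * a i j * ⟪k i, L (k j)⟫_ℝ
        - ⟪∑ i, b i • k i, L (∑ j, b j • k j)⟫_ℝ := by
    simp only [sub_mul, Finset.sum_sub_distrib,
      hL.sum_sum_add_transpose_mul_inner_map (fun i j => b i * a i j),
      inner_sum_smul_map_sum_smul]
  rw [hΦn1, hL.inner_add_smul_map_add_smul, hstages, hM]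
  ring

/-- Key Runge–Kutta energy identity for a self-adjoint linear operator `L`. -/
theorem leqrk_energy_identity
    {V : Type*} [NormedAddCommGroup V] [InnerProductSpace ℝ V]
    [FiniteDimensional ℝ V]
    (L : V →ₗ[ℝ] V) (hL : ∀ u v : V, ⟪L u, v⟫_ℝ = ⟪u, L v⟫_ℝ)
    (s : ℕ) (hs : 1 ≤ s) (a : Fin s → Fin s → ℝ) (b : Fin s → ℝ)
    (Φn : V) (Δt : ℝ) (k : Fin s → V)
    (Φ : Fin s → V) (hΦ : ∀ i, Φ i = Φn + Δt • ∑ j, a i j • k j)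
    (Φn1 : V) (hΦn1 : Φn1 = Φn + Δt • ∑ i, b i • k i) :
    (1/2) * ⟪Φn1, L Φn1⟫_ℝ - (1/2) * ⟪Φn, L Φn⟫_ℝ
      = Δt * ∑ i, b i * ⟪k i, L (Φ i)⟫_ℝ
        - (Δt ^ 2 / 2) * ∑ i, ∑ j,
            (b i * a i j + b j * a j i - b i * b j) * ⟪k i, L (k j)⟫_ℝ :=
  leqrk_energy_identity_general L hL s a b Φn Δt k Φ hΦ Φn1 hΦn1
end

section
/- Let V be a finite-dimensional real inner product space and L : V → V a self-adjoint, positive semi-definite linear operator. Let s ≥ 1, let (a_{ij})_{i,j=1}^s and (b_i)_{i=1}^s be real Runge–Kutta coefficients, define M_{ij} = b_i a_{ij} + b_j a_{ji} − b_i b_j, and assume Σ_{i,j} M_{ij} x_i x_j ≥ 0 for all x ∈ ℝ^s. Given Φⁿ ∈ V, Δt ∈ ℝ, and k_1,…,k_s ∈ V, define Φ_i = Φⁿ + Δt Σ_{j=1}^s a_{ij} k_j and Φ^{n+1} = Φⁿ + Δt Σ_{i=1}^s b_i k_i. Then (1/2)⟨Φ^{n+1}, L Φ^{n+1}⟩ −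 (1/2)⟨Φⁿ, L Φⁿ⟩ ≤ Δt Σ_{i=1}^s b_i ⟨k_i, L Φ_i⟩. -/
/-!
The classical algebraic-stability argument: for any symmetric bilinear form `B`, one step obeys
the exact identity
`B Φⁿ⁺¹ Φⁿ⁺¹ - B Φⁿ Φⁿ = 2 Δt ∑ᵢ bᵢ B kᵢ Φᵢ - Δt² ∑ᵢⱼ Mᵢⱼ B kᵢ kⱼ`,
and the last sum is nonnegative when both `M` and `B` are positive semidefinite.
Here `B u v = ⟪u, L v⟫`.
-/

open scoped InnerProductSpace MatrixOrder
open Finset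

section

variable {ι V : Type*} [Fintype ι] [AddCommGroup V] [Module ℝ V]

def rkAlgebraicStabilityMatrix (a : ι → ι → ℝ) (b : ι → ℝ) : Matrix ι ι ℝ :=
  Matrix.of fun i j => b i * a i j + b j * a j i - b i * b j

theorem rkAlgebraicStabilityMatrix_posSemidef {a : ι → ι → ℝ} {b : ι → ℝ}
    (h : ∀ x : ι → ℝ, 0 ≤ ∑ i, ∑ j, (b i * a i j + b j * a j i - b i * b j) * x i * x j) :
    (rkAlgebraicStabilityMatrix a b).PosSemidef := by
  refine .of_dotProduct_mulVec_nonneg ?_ fun x => ?_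
  · ext i j
    simp only [rkAlgebraicStabilityMatrix, Matrix.conjTranspose_apply, Matrix.of_apply, star_trivial]
    ring
  · refine (h x).trans_eq ?_
    simp only [dotProduct, Matrix.mulVec, rkAlgebraicStabilityMatrix, Matrix.of_apply, Pi.star_apply,
      star_trivial, mul_sum]
    exact sum_congr rfl fun i _ => sum_congr rfl fun j _ => by ring

/-- Writing `M = Cᵀ C`, the sum is `∑_α B (∑ᵢ C_{αi} kᵢ) (∑ⱼ C_{αj} kⱼ)`. -/
theorem Matrix.PosSemidef.sum_mul_bilinForm_nonneg {M : Matrix ι ι ℝ} (hM : M.PosSemidef)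
    (B : LinearMap.BilinForm ℝ V) (hB : ∀ v, 0 ≤ B v v) (k : ι → V) :
    0 ≤ ∑ i, ∑ j, M i j * B (k i) (k j) := by
  classical
  obtain ⟨C, rfl⟩ := CStarAlgebra.nonneg_iff_eq_star_mul_self.mp hM.nonneg
  calc (0 : ℝ) ≤ ∑ α, B (∑ i, C α i • k i) (∑ j, C α j • k j) :=
        sum_nonneg fun α _ => hB _
    _ = ∑ i, ∑ j, (star C * C) i j * B (k i) (k j) := by
        simp only [map_sum, map_smul, LinearMap.sum_apply, LinearMap.smul_apply, smul_eq_mul,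
          Matrix.mul_apply, Matrix.star_apply, star_trivial, sum_mul, mul_sum]
        rw [sum_comm]
        conv_lhs => enter [2, j]; rw [sum_comm]
        rw [sum_comm]
        exact sum_congr rfl fun i _ => sum_congr rfl fun j _ => sum_congr rfl fun α _ => by ring

theorem rk_energy_identity (B : LinearMap.BilinForm ℝ V) (hB : B.IsSymm)
    (a : ι → ι → ℝ) (b : ι → ℝ) (Φn : V) (Δt : ℝ) (k : ι → V) :
    B (Φn + Δt • ∑ i, b i • k i) (Φn + Δt • ∑ i, b i • k i) - B Φn Φn
      = 2 * Δt * ∑ i, b i * B (k i) (Φn + Δt • ∑ j, a i j • k j)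
        - Δt ^ 2 * ∑ i, ∑ j, rkAlgebraicStabilityMatrix a b i j * B (k i) (k j) := by
  set K := ∑ i, b i • k i
  have hstep : B (Φn + Δt • K) (Φn + Δt • K) = B Φn Φn + 2 * Δt * B K Φn + Δt ^ 2 * B K K := by
    simp only [map_add, map_smul, LinearMap.add_apply, LinearMap.smul_apply, smul_eq_mul,
      hB.eq Φn K]
    ring
  have hstages : ∑ i, b i * B (k i) (Φn + Δt • ∑ j, a i j • k j)
      = B K Φn + Δt * ∑ i, ∑ j, b i * a i j * B (k i) (k j) := by
    simp only [K, map_add, map_smul, map_sum, LinearMap.sum_apply, LinearMap.smul_apply,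
      smul_eq_mul, mul_add, sum_add_distrib, mul_sum]
    congr 1
    exact sum_congr rfl fun i _ => sum_congr rfl fun j _ => by ring
  have hKK : B K K = ∑ i, ∑ j, b i * b j * B (k i) (k j) := by
    simp only [K, map_sum, map_smul, LinearMap.sum_apply, LinearMap.smul_apply, smul_eq_mul,
      mul_sum]
    rw [sum_comm]
    exact sum_congr rfl fun i _ => sum_congr rfl fun j _ => by ring
  have htranspose : ∑ i, ∑ j, b j * a j i * B (k i) (k j)
      = ∑ i, ∑ j, b i * a i j * B (k i) (k j) := by
    rw [sum_comm]
    exact sum_congr rfl fun i _ => sum_congr rfl fun j _ => by rw [hB.eq]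
  have hstability : ∑ i, ∑ j, rkAlgebraicStabilityMatrix a b i j * B (k i) (k j)
      = 2 * ∑ i, ∑ j, b i * a i j * B (k i) (k j) - B K K := by
    simp only [rkAlgebraicStabilityMatrix, Matrix.of_apply, add_sub_assoc, add_mul, sub_mul,
      sum_add_distrib, sum_sub_distrib, htranspose, hKK]
    ring
  rw [hstep, hstages, hstability]
  ring

end

theorem leqrk_quadratic_energy_inequality_general
    {V : Type*} [NormedAddCommGroup V] [InnerProductSpace ℝ V]
    (L : V →ₗ[ℝ] V) (hLsym : ∀ u v : V, ⟪L u, v⟫_ℝ = ⟪u, L v⟫_ℝ)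
    (hLpos : ∀ u : V, 0 ≤ ⟪L u, u⟫_ℝ)
    (s : ℕ) (a : Fin s → Fin s → ℝ) (b : Fin s → ℝ)
    (hM : ∀ x : Fin s → ℝ,
      0 ≤ ∑ i, ∑ j, (b i * a i j + b j * a j i - b i * b j) * x i * x j)
    (Φn : V) (Δt : ℝ) (k : Fin s → V)
    (Φ : Fin s → V) (hΦ : ∀ i, Φ i = Φn + Δt • ∑ j, a i j • k j)
    (Φn1 : V) (hΦn1 : Φn1 = Φn + Δt • ∑ i, b i • k i) :
    (1/2) * ⟪Φn1, L Φn1⟫_ℝ - (1/2) * ⟪Φn, L Φn⟫_ℝ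
      ≤ Δt * ∑ i, b i * ⟪k i, L (Φ i)⟫_ℝ := by
  let B : LinearMap.BilinForm ℝ V := (innerₗ V).compl₂ L
  have hB_symm : B.IsSymm := ⟨fun u v => by
    show ⟪u, L v⟫_ℝ = ⟪v, L u⟫_ℝ
    rw [← hLsym, real_inner_comm]⟩
  have hB_nonneg : ∀ v, 0 ≤ B v v := fun v =>
    (hLpos v).trans_eq (real_inner_comm _ _)
  have hQ := (rkAlgebraicStabilityMatrix_posSemidef hM).sum_mul_bilinForm_nonneg B hB_nonneg k
  have henergy := rk_energy_identity B hB_symm a b Φn Δt k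
  simp only [B, LinearMap.compl₂_apply, innerₗ_apply_apply, ← hΦ, ← hΦn1] at henergy hQ
  linarith [mul_nonneg (sq_nonneg Δt) hQ]

/-- Runge–Kutta energy inequality for the quadratic part `(1/2)⟪Φ, LΦ⟫` under the
algebraic-stability condition that `M` is positive semi-definite. -/
theorem leqrk_quadratic_energy_inequality
    {V : Type*} [NormedAddCommGroup V] [InnerProductSpace ℝ V]
    [FiniteDimensional ℝ V]
    (L : V →ₗ[ℝ] V) (hLsym : ∀ u v : V, ⟪L u, v⟫_ℝ = ⟪u, L v⟫_ℝ)
    (hLpos : ∀ u : V, 0 ≤ ⟪L u, u⟫_ℝ)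
    (s : ℕ) (hs : 1 ≤ s) (a : Fin s → Fin s → ℝ) (b : Fin s → ℝ)
    (hM : ∀ x : Fin s → ℝ,
      0 ≤ ∑ i, ∑ j, (b i * a i j + b j * a j i - b i * b j) * x i * x j)
    (Φn : V) (Δt : ℝ) (k : Fin s → V)
    (Φ : Fin s → V) (hΦ : ∀ i, Φ i = Φn + Δt • ∑ j, a i j • k j)
    (Φn1 : V) (hΦn1 : Φn1 = Φn + Δt • ∑ i, b i • k i) :
    (1/2) * ⟪Φn1, L Φn1⟫_ℝ - (1/2) * ⟪Φn, L Φn⟫_ℝ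
      ≤ Δt * ∑ i, b i * ⟪k i, L (Φ i)⟫_ℝ :=
  leqrk_quadratic_energy_inequality_general L hLsym hLpos s a b hM Φn Δt k Φ hΦ Φn1 hΦn1
end

section
/- Let W be a finite-dimensional real inner product space. Let s ≥ 1, let (a_{ij})_{i,j=1}^s and (b_i)_{i=1}^s be real Runge–Kutta coefficients, define M_{ij} = b_i a_{ij} + b_j a_{ji} − b_i b_j, and assume Σ_{i,j} M_{ij} x_i x_j ≥ 0 for all x ∈ ℝ^s. Given qⁿ ∈ W, Δt ∈ ℝ, and l_1,…,l_s ∈ W, define Q_i = qⁿ + Δt Σ_{j=1}^s a_{ij} l_j and q^{n+1} = qⁿ + Δt Σ_{i=1}^s b_i l_i. Then ‖q^{n+1}‖² − ‖qⁿ‖² ≤ 2 Δt Σ_{i=1}^s b_i ⟨l_i, Q_i⟩. -/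
/-!
Expanding both sides gives the energy identity
`‖qⁿ⁺¹‖² - ‖qⁿ‖² = 2 Δt ∑ bᵢ ⟪lᵢ, Qᵢ⟫ - Δt² ∑ᵢⱼ Mᵢⱼ ⟪lᵢ, lⱼ⟫`, so it suffices that
`∑ᵢⱼ Mᵢⱼ ⟪lᵢ, lⱼ⟫ ≥ 0`. Expanding `⟪lᵢ, lⱼ⟫ = ∑ₖ ⟪lᵢ, eₖ⟫ ⟪lⱼ, eₖ⟫` in an orthonormal basis of the
span of the `lᵢ` writes this sum as a sum of values of the quadratic form of `M`.
-/

open scoped InnerProductSpace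

open Finset

section

variable {W : Type*} [NormedAddCommGroup W] [InnerProductSpace ℝ W] {ι : Type*} [Fintype ι]

theorem sum_sum_mul_inner_nonneg_of_finiteDimensional [FiniteDimensional ℝ W]
    (M : ι → ι → ℝ) (hM : ∀ x : ι → ℝ, 0 ≤ ∑ i, ∑ j, M i j * x i * x j) (l : ι → W) :
    0 ≤ ∑ i, ∑ j, M i j * ⟪l i, l j⟫_ℝ := by
  set e := stdOrthonormalBasis ℝ W
  calc 0 ≤ ∑ k, ∑ i, ∑ j, M i j * ⟪l i, e k⟫_ℝ * ⟪l j, e k⟫_ℝ :=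
        sum_nonneg fun k _ => hM fun i => ⟪l i, e k⟫_ℝ
    _ = ∑ i, ∑ j, M i j * ⟪l i, l j⟫_ℝ := by
        rw [sum_comm]
        refine sum_congr rfl fun i _ => ?_
        rw [sum_comm]
        refine sum_congr rfl fun j _ => ?_
        simp only [← e.sum_inner_mul_inner (l i) (l j), mul_sum, mul_assoc,
          real_inner_comm (l j)]

theorem sum_sum_mul_inner_nonneg
    (M : ι → ι → ℝ) (hM : ∀ x : ι → ℝ, 0 ≤ ∑ i, ∑ j, M i j * x i * x j) (l : ι → W) :
    0 ≤ ∑ i, ∑ j, M i j * ⟪l i, l j⟫_ℝ := by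
  let V := Submodule.span ℝ (Set.range l)
  have : FiniteDimensional ℝ V := FiniteDimensional.span_of_finite ℝ (Set.finite_range l)
  simpa only [Submodule.coe_inner] using sum_sum_mul_inner_nonneg_of_finiteDimensional M hM
    (fun i => (⟨l i, Submodule.subset_span ⟨i, rfl⟩⟩ : V))

theorem sum_sum_rk_mul_inner (a : ι → ι → ℝ) (b : ι → ℝ) (l : ι → W) :
    ∑ i, ∑ j, (b i * a i j + b j * a j i - b i * b j) * ⟪l i, l j⟫_ℝ =
      2 * ∑ i, b i * ⟪l i, ∑ j, a i j • l j⟫_ℝ - ‖∑ i, b i • l i‖ ^ 2 := by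
  have hcross : ∑ i, b i * ⟪l i, ∑ j, a i j • l j⟫_ℝ =
      ∑ i, ∑ j, b i * a i j * ⟪l i, l j⟫_ℝ := by
    simp only [inner_sum, real_inner_smul_right, mul_sum, mul_assoc]
  have hnorm : ‖∑ i, b i • l i‖ ^ 2 = ∑ i, ∑ j, b i * b j * ⟪l i, l j⟫_ℝ := by
    rw [← real_inner_self_eq_norm_sq, sum_inner]
    simp only [real_inner_smul_left, inner_sum, real_inner_smul_right]
    exact sum_congr rfl fun i _ => sum_congr rfl fun j _ => by ring
  have hsymm : ∑ i, ∑ j, b j * a j i * ⟪l i, l j⟫_ℝ =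
      ∑ i, ∑ j, b i * a i j * ⟪l i, l j⟫_ℝ := by
    rw [sum_comm]
    simp only [real_inner_comm (l _) (l _)]
  rw [hcross, hnorm]
  simp only [add_mul, sub_mul, sum_add_distrib, sum_sub_distrib, hsymm]
  ring

theorem norm_sq_rk_step_sub_norm_sq (a : ι → ι → ℝ) (b : ι → ℝ) (qn : W) (Δt : ℝ) (l : ι → W) :
    ‖qn + Δt • ∑ i, b i • l i‖ ^ 2 - ‖qn‖ ^ 2 =
      2 * Δt * ∑ i, b i * ⟪l i, qn + Δt • ∑ j, a i j • l j⟫_ℝ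
        - Δt ^ 2 * ∑ i, ∑ j, (b i * a i j + b j * a j i - b i * b j) * ⟪l i, l j⟫_ℝ := by
  rw [sum_sum_rk_mul_inner, norm_add_sq_real, norm_smul, mul_pow, Real.norm_eq_abs, sq_abs,
    real_inner_smul_right, real_inner_comm, sum_inner]
  simp only [inner_add_right, real_inner_smul_right, real_inner_smul_left, mul_add,
    sum_add_distrib, mul_left_comm (b _) Δt, ← mul_sum]
  ring

end

theorem leqrk_norm_sq_inequality_general
    {W : Type*} [NormedAddCommGroup W] [InnerProductSpace ℝ W]
    (s : ℕ) (a : Fin s → Fin s → ℝ) (b : Fin s → ℝ)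
    (hM : ∀ x : Fin s → ℝ,
      0 ≤ ∑ i, ∑ j, (b i * a i j + b j * a j i - b i * b j) * x i * x j)
    (qn : W) (Δt : ℝ) (l : Fin s → W)
    (Q : Fin s → W) (hQ : ∀ i, Q i = qn + Δt • ∑ j, a i j • l j)
    (qn1 : W) (hqn1 : qn1 = qn + Δt • ∑ i, b i • l i) :
    ‖qn1‖ ^ 2 - ‖qn‖ ^ 2 ≤ 2 * Δt * ∑ i, b i * ⟪l i, Q i⟫_ℝ := by
  rw [hqn1, norm_sq_rk_step_sub_norm_sq a b qn Δt l, funext hQ]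
  exact sub_le_self _ (mul_nonneg (sq_nonneg Δt) (sum_sum_mul_inner_nonneg _ hM l))

/-- Runge–Kutta energy inequality for the squared-norm part `‖q‖²` under the
algebraic-stability condition that `M` is positive semi-definite. -/
theorem leqrk_norm_sq_inequality
    {W : Type*} [NormedAddCommGroup W] [InnerProductSpace ℝ W]
    [FiniteDimensional ℝ W]
    (s : ℕ) (hs : 1 ≤ s) (a : Fin s → Fin s → ℝ) (b : Fin s → ℝ)
    (hM : ∀ x : Fin s → ℝ,
      0 ≤ ∑ i, ∑ j, (b i * a i j + b j * a j i - b i * b j) * x i * x j)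
    (qn : W) (Δt : ℝ) (l : Fin s → W)
    (Q : Fin s → W) (hQ : ∀ i, Q i = qn + Δt • ∑ j, a i j • l j)
    (qn1 : W) (hqn1 : qn1 = qn + Δt • ∑ i, b i • l i) :
    ‖qn1‖ ^ 2 - ‖qn‖ ^ 2 ≤ 2 * Δt * ∑ i, b i * ⟪l i, Q i⟫_ℝ :=
  leqrk_norm_sq_inequality_general s a b hM qn Δt l Q hQ qn1 hqn1
end

section
/- Let V and W be finite-dimensional real inner product spaces, L : V → V a self-adjoint positive semi-definite linear operator, and D_1, …, D_s : V → W linear maps with adjoints D_i*. Let (a_{ij}), (b_i) be real Runge–Kutta coefficients, define M_{ij} = b_i a_{ij} + b_j a_{ji} − b_i b_j and assume Σ_{i,j} M_{ij} x_i x_j ≥ 0 for all x ∈ ℝ^s. Given Φⁿ ∈ V, qⁿ ∈ W, Δt ∈ ℝ, and k_1,…,k_s ∈ V, define l_i = D_i k_i, Φ_i = Φⁿ + Δt Σ_j a_{ij} k_j, Q_i = qⁿ + Δt Σ_j a_{ij} l_j, Φ^{n+1} = Φⁿ + Δt Σ_i b_i k_i, q^{n+1} = qⁿ + Δt Σ_i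 b_i l_i, μ_i = L Φ_i + 2 D_i* Q_i, and the discrete energy ℱ(Φ, q) = (1/2)⟨Φ, LΦ⟩ + ‖q‖². Then ℱ(Φ^{n+1}, q^{n+1}) − ℱ(Φⁿ, qⁿ) ≤ Δt Σ_{i=1}^s b_i ⟨μ_i, k_i⟩. -/
open scoped InnerProductSpace BigOperators

/-!
Both halves of the energy are quadratic forms of a symmetric positive semidefinite bilinear
form `B` (`⟪·, L ·⟫` on `V`, `⟪·, ·⟫` on `W`), and for any symmetric `B` a Runge–Kutta step
`y₁ = y₀ + h Σ bᵢ vᵢ` with stages `Yᵢ = y₀ + h Σ aᵢⱼ vⱼ` satisfies the algebraic stability identity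
`B(y₁, y₁) - B(y₀, y₀) = 2h Σ bᵢ B(Yᵢ, vᵢ) - h² Σ Mᵢⱼ B(vᵢ, vⱼ)`.
Writing `M = Cᵀ C` turns the last sum into `Σₘ B(wₘ, wₘ) ≥ 0`. Adding the identities for
`(Φ, k)` and `(q, l)` and using `⟪Dᵢ* Qᵢ, kᵢ⟫ = ⟪Qᵢ, lᵢ⟫` gives the energy inequality.
-/

theorem Matrix.PosSemidef.sum_sum_mul_apply_nonneg {ι E : Type*} [Fintype ι] [AddCommGroup E]
    [Module ℝ E] {M : Matrix ι ι ℝ} (hM : M.PosSemidef) {B : E →ₗ[ℝ] E →ₗ[ℝ] ℝ}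
    (hB : B.IsNonneg) (v : ι → E) : 0 ≤ ∑ i, ∑ j, M i j * B (v i) (v j) := by
  classical
  obtain ⟨C, rfl⟩ : ∃ C : Matrix ι ι ℝ, M = star C * C := by
    open scoped MatrixOrder in
    exact CStarAlgebra.nonneg_iff_eq_star_mul_self.mp hM.nonneg
  calc 0 ≤ ∑ m, B (∑ i, C m i • v i) (∑ j, C m j • v j) :=
        Finset.sum_nonneg fun m _ => hB.nonneg _
    _ = ∑ i, ∑ j, (star C * C) i j * B (v i) (v j) := by
      simp only [map_sum, map_smul, LinearMap.sum_apply, LinearMap.smul_apply, smul_eq_mul,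
        Matrix.mul_apply, Matrix.star_apply, star_trivial, Finset.sum_mul, Finset.mul_sum]
      rw [Finset.sum_comm_cycle]
      exact Finset.sum_congr rfl fun i _ => Finset.sum_comm.trans <|
        Finset.sum_congr rfl fun j _ => Finset.sum_congr rfl fun m _ => by ring

theorem LinearMap.IsPositive.isPosSemidef_innerₗ_compl₂ {E : Type*} [NormedAddCommGroup E]
    [InnerProductSpace ℝ E] {T : E →ₗ[ℝ] E} (hT : T.IsPositive) :
    ((innerₗ E).compl₂ T).IsPosSemidef where
  isSymm := ⟨fun x y => by simpa using (real_inner_comm _ _).trans (hT.isSymmetric y x)⟩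
  isNonneg := ⟨fun x => by simpa using hT.inner_nonneg_right x⟩

namespace RungeKutta

variable {ι : Type*} [Fintype ι]

def algebraicStabilityMatrix (a : Matrix ι ι ℝ) (b : ι → ℝ) : Matrix ι ι ℝ :=
  Matrix.of fun i j => b i * a i j + b j * a j i - b i * b j

theorem posSemidef_algebraicStabilityMatrix {a : Matrix ι ι ℝ} {b : ι → ℝ}
    (h : ∀ x : ι → ℝ, 0 ≤ ∑ i, ∑ j, (b i * a i j + b j * a j i - b i * b j) * x i * x j) :
    (algebraicStabilityMatrix a b).PosSemidef := by
  refine .of_dotProduct_mulVec_nonneg ?_ fun x => ?_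
  · ext i j
    simp only [algebraicStabilityMatrix, Matrix.conjTranspose_apply, Matrix.of_apply, star_trivial]
    ring
  · simpa [algebraicStabilityMatrix, dotProduct, Matrix.mulVec, Finset.mul_sum, mul_comm,
      mul_assoc, mul_left_comm] using h x

variable {E : Type*} [AddCommGroup E] [Module ℝ E] {B : E →ₗ[ℝ] E →ₗ[ℝ] ℝ}

theorem apply_update_eq (hB : B.IsSymm) (a : Matrix ι ι ℝ) (b : ι → ℝ) (x₀ : E) (h : ℝ)
    (v : ι → E) :
    B (x₀ + h • ∑ i, b i • v i) (x₀ + h • ∑ i, b i • v i)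
      = B x₀ x₀ + 2 * h * ∑ i, b i * B (x₀ + h • ∑ j, a i j • v j) (v i)
        - h ^ 2 * ∑ i, ∑ j, algebraicStabilityMatrix a b i j * B (v i) (v j) := by
  have hsymm : ∀ x y, B x y = B y x := hB.eq
  set K := ∑ i, b i • v i
  have hK : B K K = ∑ i, ∑ j, b i * b j * B (v i) (v j) := by
    simp only [K, map_sum, map_smul, LinearMap.sum_apply, LinearMap.smul_apply, smul_eq_mul,
      Finset.mul_sum, mul_assoc]
    rw [Finset.sum_comm]
    exact Finset.sum_congr rfl fun i _ => Finset.sum_congr rfl fun j _ => mul_left_comm _ _ _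
  have hstages : ∑ i, b i * B (x₀ + h • ∑ j, a i j • v j) (v i)
      = B x₀ K + h * ∑ i, ∑ j, b i * a i j * B (v i) (v j) := by
    simp only [K, map_add, map_sum, map_smul, LinearMap.add_apply, LinearMap.sum_apply,
      LinearMap.smul_apply, smul_eq_mul, Finset.mul_sum, mul_add, Finset.sum_add_distrib]
    congr 1
    refine Finset.sum_congr rfl fun i _ => Finset.sum_congr rfl fun j _ => ?_
    rw [hsymm (v j)]
    ring
  have hM : ∑ i, ∑ j, algebraicStabilityMatrix a b i j * B (v i) (v j)
      = 2 * ∑ i, ∑ j, b i * a i j * B (v i) (v j) - ∑ i, ∑ j, b i * b j * B (v i) (v j) := by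
    have hswap : ∑ i, ∑ j, b j * a j i * B (v i) (v j)
        = ∑ i, ∑ j, b i * a i j * B (v i) (v j) := by
      rw [Finset.sum_comm]
      simp_rw [hsymm (v _) (v _)]
    simp only [algebraicStabilityMatrix, Matrix.of_apply, sub_mul, add_mul,
      Finset.sum_add_distrib, Finset.sum_sub_distrib, hswap]
    ring
  rw [hstages, hM]
  simp only [map_add, map_smul, LinearMap.add_apply, LinearMap.smul_apply, smul_eq_mul]
  rw [hsymm K x₀, hK]
  ring

theorem apply_update_sub_le (hB : B.IsPosSemidef) {a : Matrix ι ι ℝ} {b : ι → ℝ}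
    (hM : (algebraicStabilityMatrix a b).PosSemidef) (x₀ : E) (h : ℝ) (v : ι → E) :
    B (x₀ + h • ∑ i, b i • v i) (x₀ + h • ∑ i, b i • v i) - B x₀ x₀
      ≤ 2 * h * ∑ i, b i * B (x₀ + h • ∑ j, a i j • v j) (v i) := by
  rw [apply_update_eq hB.isSymm]
  linarith [mul_nonneg (sq_nonneg h) (hM.sum_sum_mul_apply_nonneg hB.isNonneg v)]

end RungeKutta

theorem leqrk_energy_inequality_general
    {V W : Type*} [NormedAddCommGroup V] [InnerProductSpace ℝ V]
    [FiniteDimensional ℝ V]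
    [NormedAddCommGroup W] [InnerProductSpace ℝ W] [FiniteDimensional ℝ W]
    (L : V →ₗ[ℝ] V) (hLsym : ∀ u v : V, ⟪L u, v⟫_ℝ = ⟪u, L v⟫_ℝ)
    (hLpos : ∀ u : V, 0 ≤ ⟪L u, u⟫_ℝ)
    (s : ℕ) (a : Fin s → Fin s → ℝ) (b : Fin s → ℝ)
    (hM : ∀ x : Fin s → ℝ,
      0 ≤ ∑ i, ∑ j, (b i * a i j + b j * a j i - b i * b j) * x i * x j)
    (D : Fin s → V →ₗ[ℝ] W)
    (Φn : V) (qn : W) (Δt : ℝ) (k : Fin s → V)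
    (l : Fin s → W) (hl : ∀ i, l i = D i (k i))
    (Φ : Fin s → V) (hΦ : ∀ i, Φ i = Φn + Δt • ∑ j, a i j • k j)
    (Q : Fin s → W) (hQ : ∀ i, Q i = qn + Δt • ∑ j, a i j • l j)
    (Φn1 : V) (hΦn1 : Φn1 = Φn + Δt • ∑ i, b i • k i)
    (qn1 : W) (hqn1 : qn1 = qn + Δt • ∑ i, b i • l i)
    (μ : Fin s → V)
    (hμ : ∀ i, μ i = L (Φ i) + (2 : ℝ) • (LinearMap.adjoint (D i)) (Q i)) :
    ((1/2) * ⟪Φn1, L Φn1⟫_ℝ + ‖qn1‖ ^ 2) - ((1/2) * ⟪Φn, L Φn⟫_ℝ + ‖qn‖ ^ 2)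
      ≤ Δt * ∑ i, b i * ⟪μ i, k i⟫_ℝ := by
  have hL : L.IsPositive := L.isPositive_iff.2 ⟨hLsym, hLpos⟩
  have hMpsd := RungeKutta.posSemidef_algebraicStabilityMatrix hM
  have hΦstep := RungeKutta.apply_update_sub_le hL.isPosSemidef_innerₗ_compl₂ hMpsd Φn Δt k
  have hqstep := RungeKutta.apply_update_sub_le isPosSemidef_inner hMpsd qn Δt l
  simp only [LinearMap.compl₂_apply, innerₗ_apply_apply, ← hΦ, ← hQ, ← hΦn1, ← hqn1,
    real_inner_self_eq_norm_sq] at hΦstep hqstep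
  have hμk : ∀ i, b i * ⟪μ i, k i⟫_ℝ = b i * ⟪Φ i, L (k i)⟫_ℝ + 2 * (b i * ⟪Q i, l i⟫_ℝ) := by
    intro i
    rw [hμ, inner_add_left, real_inner_smul_left, LinearMap.adjoint_inner_left, hLsym, ← hl]
    ring
  simp only [hμk, Finset.sum_add_distrib, ← Finset.mul_sum]
  linear_combination (1 / 2 : ℝ) * hΦstep + hqstep

/-- Discrete energy inequality for the quadratized energy
`ℱ(Φ, q) = (1/2)⟪Φ, LΦ⟫ + ‖q‖²` along one step of the LEQRK scheme. -/
theorem leqrk_energy_inequality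
    {V W : Type*} [NormedAddCommGroup V] [InnerProductSpace ℝ V]
    [FiniteDimensional ℝ V]
    [NormedAddCommGroup W] [InnerProductSpace ℝ W] [FiniteDimensional ℝ W]
    (L : V →ₗ[ℝ] V) (hLsym : ∀ u v : V, ⟪L u, v⟫_ℝ = ⟪u, L v⟫_ℝ)
    (hLpos : ∀ u : V, 0 ≤ ⟪L u, u⟫_ℝ)
    (s : ℕ) (hs : 1 ≤ s) (a : Fin s → Fin s → ℝ) (b : Fin s → ℝ)
    (hM : ∀ x : Fin s → ℝ,
      0 ≤ ∑ i, ∑ j, (b i * a i j + b j * a j i - b i * b j) * x i * x j)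
    (D : Fin s → V →ₗ[ℝ] W)
    (Φn : V) (qn : W) (Δt : ℝ) (k : Fin s → V)
    (l : Fin s → W) (hl : ∀ i, l i = D i (k i))
    (Φ : Fin s → V) (hΦ : ∀ i, Φ i = Φn + Δt • ∑ j, a i j • k j)
    (Q : Fin s → W) (hQ : ∀ i, Q i = qn + Δt • ∑ j, a i j • l j)
    (Φn1 : V) (hΦn1 : Φn1 = Φn + Δt • ∑ i, b i • k i)
    (qn1 : W) (hqn1 : qn1 = qn + Δt • ∑ i, b i • l i)
    (μ : Fin s → V)
    (hμ : ∀ i, μ i = L (Φ i) + (2 : ℝ) • (LinearMap.adjoint (D i)) (Q i)) :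
    ((1/2) * ⟪Φn1, L Φn1⟫_ℝ + ‖qn1‖ ^ 2) - ((1/2) * ⟪Φn, L Φn⟫_ℝ + ‖qn‖ ^ 2)
      ≤ Δt * ∑ i, b i * ⟪μ i, k i⟫_ℝ :=
  leqrk_energy_inequality_general L hLsym hLpos s a b hM D Φn qn Δt k l hl Φ hΦ Q hQ Φn1 hΦn1 qn1
    hqn1 μ hμ
end

section
/- (Unique solvability of the LEQRK scheme, Theorem 3.2, fully discrete form.) Let V, W, U be finite-dimensional real inner product spaces, L : V → V self-adjoint positive semi-definite, B : V → U linear, and set G = −B*B (so G is negative semi-definite). Let (a_{ij})_{i,j=1}^s be real Runge–Kutta coefficients whose matrix is positive semi-definite as a quadratic form, i.e., Σ_{i,j} a_{ij} x_i x_j ≥ 0 for all x ∈ ℝ^s, and let Δt ≥ 0. Then for every Φⁿ ∈ V, qⁿ ∈ W and all linear maps D_1, …, D_s : V → W, there exists a unique tuple (Φ_i, Q_i, k_i, l_i)_{i=1}^s with Φ_i, k_i ∈ V and Q_i, l_i ∈ W satisfying, for all i: Φ_i = Φⁿ + Δt Σ_j a_{ij} k_j, Q_i = qⁿ + Δt Σ_j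 a_{ij} l_j, k_i = G(L Φ_i + 2 D_i* Q_i), l_i = D_i k_i. -/
open scoped InnerProductSpace

/-!
The scheme is an affine fixed-point problem `X = X₀ + N X` for a linear map `N` on the
finite-dimensional space of stage tuples `(Φᵢ, Qᵢ, kᵢ, lᵢ)`, so it is uniquely solvable as soon as
`N` has no nonzero fixed point. For a fixed point, `kᵢ = G yᵢ` with `yᵢ = L Φᵢ + 2 Dᵢ* Qᵢ`, and
`∑ᵢ ⟪yᵢ, kᵢ⟫ = Δt ∑ᵢⱼ aᵢⱼ ⟪kⱼ, L kᵢ⟫ + 2 Δt ∑ᵢⱼ aᵢⱼ ⟪lⱼ, lᵢ⟫ ≥ 0`: writing the positive operator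
`L` (or the identity) as a sum of rank-one operators `u ⟪u, ·⟫` turns each double sum into a sum
of values of the quadratic form of `(aᵢⱼ)`. On the other hand `∑ᵢ ⟪yᵢ, kᵢ⟫ = -∑ᵢ ‖B yᵢ‖² ≤ 0`, so
`B yᵢ = 0`, hence `k = 0`, and then all the other components vanish.
-/

theorem LinearMap.IsPositive.sum_inner_sum_smul_nonneg {ι E : Type*} [Fintype ι]
    [NormedAddCommGroup E] [InnerProductSpace ℝ E] [FiniteDimensional ℝ E]
    {a : ι → ι → ℝ} (ha : ∀ x : ι → ℝ, 0 ≤ ∑ i, ∑ j, a i j * x i * x j)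
    {P : E →ₗ[ℝ] E} (hP : P.IsPositive) (v : ι → E) :
    0 ≤ ∑ i, ⟪∑ j, a i j • v j, P (v i)⟫_ℝ := by
  obtain ⟨m, u, hPu⟩ := ContinuousLinearMap.isPositive_iff_eq_sum_rankOne.mp
    ((LinearMap.isPositive_toContinuousLinearMap_iff P).mpr hP)
  have hP_apply (x : E) : P x = ∑ k, ⟪u k, x⟫_ℝ • u k := by
    simpa using congr($hPu x)
  calc (0 : ℝ) ≤ ∑ k, ∑ i, ∑ j, a i j * ⟪u k, v i⟫_ℝ * ⟪u k, v j⟫_ℝ :=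
        Finset.sum_nonneg fun k _ => ha fun i => ⟪u k, v i⟫_ℝ
    _ = ∑ i, ⟪∑ j, a i j • v j, P (v i)⟫_ℝ := by
        simp only [hP_apply, inner_sum, sum_inner, real_inner_smul_right, real_inner_comm (u _)]
        rw [Finset.sum_comm]
        exact Finset.sum_congr rfl fun i _ => Finset.sum_congr rfl fun k _ =>
          Finset.sum_congr rfl fun j _ => by ring

theorem eq_zero_of_eq_neg_adjoint_comp_self_of_sum_inner_nonneg {ι E F : Type*} [Fintype ι]
    [NormedAddCommGroup E] [InnerProductSpace ℝ E] [FiniteDimensional ℝ E]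
    [NormedAddCommGroup F] [InnerProductSpace ℝ F] [FiniteDimensional ℝ F]
    {G : E →ₗ[ℝ] E} (B : E →ₗ[ℝ] F) (hG : G = -(LinearMap.adjoint B ∘ₗ B)) {x y : ι → E}
    (hxy : ∀ i, x i = G (y i))
    (hnonneg : 0 ≤ ∑ i, ⟪y i, x i⟫_ℝ) : x = 0 := by
  have hBy : ∀ i, B (y i) = 0 := by
    have hsum : ∑ i, ‖B (y i)‖ ^ 2 = -∑ i, ⟪y i, x i⟫_ℝ := by
      simp [hxy, hG, LinearMap.adjoint_inner_right]
    have hzero := (Finset.sum_eq_zero_iff_of_nonneg fun i _ => sq_nonneg ‖B (y i)‖).mp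
      (le_antisymm (by linarith) (by positivity))
    simpa using fun i => hzero i (Finset.mem_univ i)
  funext i
  simp [hxy, hG, hBy]

theorem LinearMap.existsUnique_eq_add_apply {K E : Type*} [Field K] [AddCommGroup E] [Module K E]
    [FiniteDimensional K E] (N : E →ₗ[K] E) (hN : ∀ x, N x = x → x = 0) (x₀ : E) :
    ∃! x, x = x₀ + N x := by
  set T : E →ₗ[K] E := LinearMap.id - N
  have hinj : Function.Injective T := by
    rw [← LinearMap.ker_eq_bot, LinearMap.ker_eq_bot']
    exact fun x hx => hN x (sub_eq_zero.mp hx).symm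
  have hiff (x : E) : x = x₀ + N x ↔ T x = x₀ := by
    rw [LinearMap.sub_apply, LinearMap.id_apply, sub_eq_iff_eq_add]
  obtain ⟨x, hx⟩ := LinearMap.injective_iff_surjective.mp hinj x₀
  exact ⟨x, (hiff x).mpr hx, fun y hy => hinj (((hiff y).mp hy).trans hx.symm)⟩

namespace LEQRK

variable {ι V W : Type*} [Fintype ι]
  [NormedAddCommGroup V] [InnerProductSpace ℝ V] [FiniteDimensional ℝ V]
  [NormedAddCommGroup W] [InnerProductSpace ℝ W] [FiniteDimensional ℝ W]
  (L G : V →ₗ[ℝ] V) (D : ι → V →ₗ[ℝ] W) (a : ι → ι → ℝ) (Δt : ℝ)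

/-- The scheme for a stage tuple `X = (Φ, Q, k, l)` reads `X = (Φⁿ, qⁿ, 0, 0) + linearPart X`. -/
noncomputable def linearPart :
    (ι → V) × (ι → W) × (ι → V) × (ι → W) →ₗ[ℝ] (ι → V) × (ι → W) × (ι → V) × (ι → W) where
  toFun X :=
    (fun i => Δt • ∑ j, a i j • X.2.2.1 j,
     fun i => Δt • ∑ j, a i j • X.2.2.2 j,
     fun i => G (L (X.1 i) + (2 : ℝ) • LinearMap.adjoint (D i) (X.2.1 i)),
     fun i => D i (X.2.2.1 i))
  map_add' X Y := by
    ext i <;> simp [smul_add, Finset.sum_add_distrib, add_add_add_comm]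
  map_smul' c X := by
    ext i <;> simp [Finset.smul_sum, smul_comm c]

variable {L G D a Δt} in
theorem eq_zero_of_linearPart_apply_eq_self {U : Type*} [NormedAddCommGroup U]
    [InnerProductSpace ℝ U] [FiniteDimensional ℝ U] (hL : L.IsPositive) (B : V →ₗ[ℝ] U)
    (hG : G = -(LinearMap.adjoint B ∘ₗ B))
    (ha : ∀ x : ι → ℝ, 0 ≤ ∑ i, ∑ j, a i j * x i * x j) (hΔt : 0 ≤ Δt)
    {X : (ι → V) × (ι → W) × (ι → V) × (ι → W)} (hX : linearPart L G D a Δt X = X) : X = 0 := by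
  obtain ⟨Φ, Q, k, l⟩ := X
  simp only [linearPart, LinearMap.coe_mk, AddHom.coe_mk, Prod.mk.injEq] at hX
  obtain ⟨rfl, rfl, hk, rfl⟩ := hX
  have hk0 : k = 0 := by
    refine eq_zero_of_eq_neg_adjoint_comp_self_of_sum_inner_nonneg B hG
      (y := fun i => L (Δt • ∑ j, a i j • k j) +
        (2 : ℝ) • LinearMap.adjoint (D i) (Δt • ∑ j, a i j • D j (k j)))
      (fun i => (congrFun hk i).symm) ?_
    have hLk := hL.sum_inner_sum_smul_nonneg ha k
    have hDk := LinearMap.isPositive_id.sum_inner_sum_smul_nonneg ha fun i => D i (k i)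
    have hsplit : ∑ i, ⟪L (Δt • ∑ j, a i j • k j) +
          (2 : ℝ) • LinearMap.adjoint (D i) (Δt • ∑ j, a i j • D j (k j)), k i⟫_ℝ =
        Δt * ∑ i, ⟪∑ j, a i j • k j, L (k i)⟫_ℝ +
          2 * Δt * ∑ i, ⟪∑ j, a i j • D j (k j), D i (k i)⟫_ℝ := by
      simp only [inner_add_left, map_smul, real_inner_smul_left, LinearMap.adjoint_inner_left,
        hL.isSymmetric _ (k _), Finset.sum_add_distrib, Finset.mul_sum, mul_assoc]
    rw [hsplit]
    exact add_nonneg (mul_nonneg hΔt hLk) (mul_nonneg (by positivity) (by simpa using hDk))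
  subst hk0
  ext i <;> simp

end LEQRK

theorem leqrk_unique_solvability_general
    {V W U : Type*} [NormedAddCommGroup V] [InnerProductSpace ℝ V]
    [FiniteDimensional ℝ V]
    [NormedAddCommGroup W] [InnerProductSpace ℝ W] [FiniteDimensional ℝ W]
    [NormedAddCommGroup U] [InnerProductSpace ℝ U] [FiniteDimensional ℝ U]
    (L : V →ₗ[ℝ] V) (hLsym : ∀ u v : V, ⟪L u, v⟫_ℝ = ⟪u, L v⟫_ℝ)
    (hLpos : ∀ u : V, 0 ≤ ⟪L u, u⟫_ℝ)
    (B : V →ₗ[ℝ] U) (G : V →ₗ[ℝ] V)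
    (hG : G = -(LinearMap.adjoint B ∘ₗ B))
    (s : ℕ) (a : Fin s → Fin s → ℝ)
    (hA : ∀ x : Fin s → ℝ, 0 ≤ ∑ i, ∑ j, a i j * x i * x j)
    (Δt : ℝ) (hΔt : 0 ≤ Δt)
    (Φn : V) (qn : W) (D : Fin s → V →ₗ[ℝ] W) :
    ∃! X : (Fin s → V) × (Fin s → W) × (Fin s → V) × (Fin s → W),
      (∀ i, X.1 i = Φn + Δt • ∑ j, a i j • X.2.2.1 j) ∧
      (∀ i, X.2.1 i = qn + Δt • ∑ j, a i j • X.2.2.2 j) ∧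
      (∀ i, X.2.2.1 i
        = G (L (X.1 i) + (2 : ℝ) • (LinearMap.adjoint (D i)) (X.2.1 i))) ∧
      (∀ i, X.2.2.2 i = D i (X.2.2.1 i)) := by
  have hL : L.IsPositive := ⟨hLsym, hLpos⟩
  have h := (LEQRK.linearPart L G D a Δt).existsUnique_eq_add_apply
    (fun _ hX => LEQRK.eq_zero_of_linearPart_apply_eq_self hL B hG hA hΔt hX)
    (fun _ => Φn, fun _ => qn, 0, 0)
  simpa [LEQRK.linearPart, Prod.ext_iff, funext_iff] using h

/-- Theorem 3.2 (fully discrete form): when the Runge–Kutta coefficient matrix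
`A = (aᵢⱼ)` has a nonnegative quadratic form and the mobility is `G = -B*B`,
the `s`-stage LEQRK scheme is uniquely solvable. -/
theorem leqrk_unique_solvability
    {V W U : Type*} [NormedAddCommGroup V] [InnerProductSpace ℝ V]
    [FiniteDimensional ℝ V]
    [NormedAddCommGroup W] [InnerProductSpace ℝ W] [FiniteDimensional ℝ W]
    [NormedAddCommGroup U] [InnerProductSpace ℝ U] [FiniteDimensional ℝ U]
    (L : V →ₗ[ℝ] V) (hLsym : ∀ u v : V, ⟪L u, v⟫_ℝ = ⟪u, L v⟫_ℝ)
    (hLpos : ∀ u : V, 0 ≤ ⟪L u, u⟫_ℝ)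
    (B : V →ₗ[ℝ] U) (G : V →ₗ[ℝ] V)
    (hG : G = -(LinearMap.adjoint B ∘ₗ B))
    (s : ℕ) (hs : 1 ≤ s) (a : Fin s → Fin s → ℝ)
    (hA : ∀ x : Fin s → ℝ, 0 ≤ ∑ i, ∑ j, a i j * x i * x j)
    (Δt : ℝ) (hΔt : 0 ≤ Δt)
    (Φn : V) (qn : W) (D : Fin s → V →ₗ[ℝ] W) :
    ∃! X : (Fin s → V) × (Fin s → W) × (Fin s → V) × (Fin s → W),
      (∀ i, X.1 i = Φn + Δt • ∑ j, a i j • X.2.2.1 j) ∧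
      (∀ i, X.2.1 i = qn + Δt • ∑ j, a i j • X.2.2.2 j) ∧
      (∀ i, X.2.2.1 i
        = G (L (X.1 i) + (2 : ℝ) • (LinearMap.adjoint (D i)) (X.2.1 i))) ∧
      (∀ i, X.2.2.2 i = D i (X.2.2.1 i)) :=
  leqrk_unique_solvability_general L hLsym hLpos B G hG s a hA Δt hΔt Φn qn D
end

section
/- (Algebraic stability of the 3-stage 4th-order DIRK method.) Let σ = cos(π/18)/√3 + 1/2 and μ = 1/(6(2σ − 1)²), and consider the Butcher coefficients a_{11} = a_{22} = a_{33} = σ, a_{21} = 1/2 − σ, a_{31} = 2σ, a_{32} = 1 − 4σ, a_{12} = a_{13} = a_{23} = 0, and b = (μ, 1 − 2μ, μ). Then: (i) σ > 0; (ii) b_i ≥ 0 for i = 1, 2, 3 (i.e., μ ≥ 0 and 1 − 2μ ≥ 0); (iii) the symmetric 3×3 matrix M with entries M_{ij} = b_i a_{ij} + b_j a_{ji} − b_i b_j is positive semi-definite. -/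
open Real

/-! With `s = 2σ - 1 = 2 cos(π/18)/√3`, the triple-angle formula and `cos(π/6) = √3/2` make `s`
a positive root of `s³ = s + 1/3`. Since `μ = 1/(6s²)`, this cubic is precisely the relation under
which the algebraic-stability form of the method collapses to `μ(2σ - μ)(x₀ - 2x₁ + x₂)²`, and it
forces `s² > 1`, hence `0 ≤ μ ≤ 1/6 < 2σ`. -/

lemma cube_two_mul_cos_pi_div_eighteen_div_sqrt_three :
    (2 * cos (π / 18) / √3) ^ 3 = 2 * cos (π / 18) / √3 + 1 / 3 := by
  have h3 : √3 ^ 2 = 3 := sq_sqrt (by norm_num)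
  have htriple : 4 * cos (π / 18) ^ 3 - 3 * cos (π / 18) = √3 / 2 := by
    rw [← cos_three_mul, show 3 * (π / 18) = π / 6 by ring, cos_pi_div_six]
  field_simp
  linear_combination 6 * htriple - (6 * cos (π / 18) + √3) * h3

lemma two_mul_cos_pi_div_eighteen_div_sqrt_three_pos : 0 < 2 * cos (π / 18) / √3 := by
  have : 0 < cos (π / 18) := cos_pos_of_mem_Ioo ⟨by linarith [pi_pos], by linarith [pi_pos]⟩
  positivity

lemma one_lt_sq_of_cube_eq {s : ℝ} (hs : 0 < s) (h : s ^ 3 = s + 1 / 3) : 1 < s ^ 2 := by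
  nlinarith

def algStabForm {ι : Type*} [Fintype ι] (a : ι → ι → ℝ) (b x : ι → ℝ) : ℝ :=
  ∑ i, ∑ j, (b i * a i j + b j * a j i - b i * b j) * x i * x j

lemma algStabForm_dirk3 {σ μ : ℝ} (h : (2 * σ - 1) + 4 * μ * (1 - 3 * σ) = 0) (x : Fin 3 → ℝ) :
    algStabForm ![![σ, 0, 0], ![1/2 - σ, σ, 0], ![2 * σ, 1 - 4 * σ, σ]] ![μ, 1 - 2 * μ, μ] x
      = μ * (2 * σ - μ) * (x 0 - 2 * x 1 + x 2) ^ 2 := by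
  simp only [algStabForm, Fin.sum_univ_three, Fin.isValue, Matrix.cons_val_zero,
    Matrix.cons_val_one, Matrix.cons_val, mul_zero, zero_add, add_zero]
  linear_combination (x 1 ^ 2 - x 0 * x 1) * h

lemma dirk3_order_condition {σ μ : ℝ} (hcube : (2 * σ - 1) ^ 3 = (2 * σ - 1) + 1 / 3)
    (hμ : μ = 1 / (6 * (2 * σ - 1) ^ 2)) : (2 * σ - 1) + 4 * μ * (1 - 3 * σ) = 0 := by
  have hs : 2 * σ - 1 ≠ 0 := by
    rintro h0
    rw [h0] at hcube
    norm_num at hcube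
  rw [hμ]
  field_simp
  linear_combination 6 * hcube

/-- Algebraic stability of the 3-stage 4th-order DIRK method with
`σ = cos(π/18)/√3 + 1/2` and `μ = 1/(6(2σ - 1)²)`: `σ > 0`, the weights are
nonnegative, and the stability matrix `M` is positive semi-definite. -/
theorem dirk4_algebraically_stable
    (σ μ : ℝ)
    (hσ : σ = Real.cos (Real.pi / 18) / Real.sqrt 3 + 1/2)
    (hμ : μ = 1 / (6 * (2 * σ - 1) ^ 2))
    (a : Fin 3 → Fin 3 → ℝ)
    (ha : a = ![![σ, 0, 0], ![1/2 - σ, σ, 0], ![2 * σ, 1 - 4 * σ, σ]])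
    (b : Fin 3 → ℝ) (hb : b = ![μ, 1 - 2 * μ, μ]) :
    0 < σ ∧
    (∀ i : Fin 3, 0 ≤ b i) ∧
    (∀ x : Fin 3 → ℝ,
      0 ≤ ∑ i, ∑ j, (b i * a i j + b j * a j i - b i * b j) * x i * x j) := by
  have hs : 2 * σ - 1 = 2 * cos (π / 18) / √3 := by rw [hσ]; ring
  have hs_pos : 0 < 2 * σ - 1 := hs ▸ two_mul_cos_pi_div_eighteen_div_sqrt_three_pos
  have hcube : (2 * σ - 1) ^ 3 = (2 * σ - 1) + 1 / 3 :=
    hs ▸ cube_two_mul_cos_pi_div_eighteen_div_sqrt_three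
  have hμ_nonneg : 0 ≤ μ := hμ ▸ by positivity
  have hμ_le : μ ≤ 1 / 6 := by
    rw [hμ, div_le_div_iff₀ (by positivity) (by norm_num)]
    nlinarith [one_lt_sq_of_cube_eq hs_pos hcube]
  subst ha hb
  refine ⟨by linarith, fun i => ?_, fun x => ?_⟩
  · fin_cases i <;>
      simp only [Fin.isValue, Fin.zero_eta, Fin.mk_one, Fin.reduceFinMk, Matrix.cons_val_zero,
        Matrix.cons_val_one, Matrix.cons_val, sub_nonneg] <;>
      linarith
  · change 0 ≤ algStabForm _ _ x
    rw [algStabForm_dirk3 (dirk3_order_condition hcube hμ)]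
    have : 0 ≤ 2 * σ - μ := by linarith
    positivity
end

section
/- (Energy dissipation law of the EQ-reformulated/linearized gradient flow, continuous in time.) Let V and W be finite-dimensional real inner product spaces and L : V → V a self-adjoint linear operator. Let Φ : ℝ → V and q : ℝ → W be differentiable, let D : ℝ → (V → W linear) and G : ℝ → (V → V linear) be families of linear maps with ⟨v, G(t) v⟩ ≤ 0 for all t ∈ ℝ and v ∈ V. Suppose that for all t: Φ′(t) = G(t) μ(t) where μ(t) = L Φ(t) + 2 D(t)* q(t), and q′(t) = D(t) Φ′(t). Then the energy ℱ(t) = (1/2)⟨Φ(t), L Φ(t)⟩ + ‖q(t)‖² is differentiable with ℱ′(t) = ⟨μ(t), G(t) μ(t)⟩ ≤ 0 for all t; in particular ℱ is nonincreasing on ℝ. -/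
/-!
Differentiating the quadratized energy gives `ℱ' = ⟪LΦ, Φ'⟫ + 2⟪q, q'⟫`; substituting
`q' = DΦ'` and moving `D` across the inner product turns this into `⟪LΦ + 2D*q, Φ'⟫ = ⟪μ, Φ'⟫`,
which equals `⟪μ, Gμ⟫ ≤ 0` once `Φ' = Gμ`. A nonpositive derivative makes `ℱ` antitone.
-/

open scoped InnerProductSpace

section QuadratizedEnergy

variable {V W : Type*} [NormedAddCommGroup V] [InnerProductSpace ℝ V]
  [NormedAddCommGroup W] [InnerProductSpace ℝ W]

theorem LinearMap.IsSymmetric.hasDerivAt_inner_apply [FiniteDimensional ℝ V]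
    {L : V →ₗ[ℝ] V} (hL : L.IsSymmetric) {Φ : ℝ → V} {Φ' : V} {t : ℝ}
    (hΦ : HasDerivAt Φ Φ' t) :
    HasDerivAt (fun s => ⟪Φ s, L (Φ s)⟫_ℝ) (2 * ⟪L (Φ t), Φ'⟫_ℝ) t := by
  have hLΦ : HasDerivAt (fun s => L (Φ s)) (L Φ') t :=
    L.toContinuousLinearMap.hasFDerivAt.comp_hasDerivAt t hΦ
  refine (hΦ.inner ℝ hLΦ).congr_deriv ?_
  rw [← hL, real_inner_comm Φ']
  ring

theorem inner_add_two_smul_adjoint_left [FiniteDimensional ℝ V] [FiniteDimensional ℝ W]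
    (D : V →ₗ[ℝ] W) (u v : V) (r : W) :
    ⟪u + (2 : ℝ) • D.adjoint r, v⟫_ℝ = ⟪u, v⟫_ℝ + 2 * ⟪r, D v⟫_ℝ := by
  rw [inner_add_left, real_inner_smul_left, LinearMap.adjoint_inner_left]

theorem hasDerivAt_quadratized_energy [FiniteDimensional ℝ V] [FiniteDimensional ℝ W]
    {L : V →ₗ[ℝ] V} (hL : L.IsSymmetric) (D : V →ₗ[ℝ] W)
    {Φ : ℝ → V} {q : ℝ → W} {Φ' : V} {t : ℝ}
    (hΦ : HasDerivAt Φ Φ' t) (hq : HasDerivAt q (D Φ') t) :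
    HasDerivAt (fun s => (1 / 2) * ⟪Φ s, L (Φ s)⟫_ℝ + ‖q s‖ ^ 2)
      ⟪L (Φ t) + (2 : ℝ) • D.adjoint (q t), Φ'⟫_ℝ t := by
  rw [inner_add_two_smul_adjoint_left]
  refine (((hL.hasDerivAt_inner_apply hΦ).const_mul (1 / 2)).add hq.norm_sq).congr_deriv ?_
  ring

end QuadratizedEnergy

/-- Energy dissipation law of the EQ-reformulated/linearized gradient flow,
continuous in time: along solutions of `Φ' = G μ`, `q' = D Φ'` with
`μ = LΦ + 2D*q`, the quadratized energy `ℱ = (1/2)⟪Φ, LΦ⟫ + ‖q‖²` satisfies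
`ℱ' = ⟪μ, Gμ⟫ ≤ 0` and is nonincreasing. -/
theorem eq_reformulated_energy_dissipation
    {V W : Type*} [NormedAddCommGroup V] [InnerProductSpace ℝ V]
    [FiniteDimensional ℝ V]
    [NormedAddCommGroup W] [InnerProductSpace ℝ W] [FiniteDimensional ℝ W]
    (L : V →ₗ[ℝ] V) (hLsym : ∀ u v : V, ⟪L u, v⟫_ℝ = ⟪u, L v⟫_ℝ)
    (Φ : ℝ → V) (q : ℝ → W) (Φ' : ℝ → V) (q' : ℝ → W)
    (D : ℝ → V →ₗ[ℝ] W) (G : ℝ → V →ₗ[ℝ] V)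
    (hG : ∀ (t : ℝ) (v : V), ⟪v, G t v⟫_ℝ ≤ 0)
    (hΦ : ∀ t, HasDerivAt Φ (Φ' t) t) (hq : ∀ t, HasDerivAt q (q' t) t)
    (μ : ℝ → V)
    (hμ : ∀ t, μ t = L (Φ t) + (2 : ℝ) • (LinearMap.adjoint (D t)) (q t))
    (heq1 : ∀ t, Φ' t = G t (μ t)) (heq2 : ∀ t, q' t = D t (Φ' t))
    (F : ℝ → ℝ)
    (hF : ∀ t, F t = (1/2) * ⟪Φ t, L (Φ t)⟫_ℝ + ‖q t‖ ^ 2) :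
    (∀ t, HasDerivAt F (⟪μ t, G t (μ t)⟫_ℝ) t) ∧
    (∀ t, ⟪μ t, G t (μ t)⟫_ℝ ≤ 0) ∧
    Antitone F := by
  have hF' : ∀ t, HasDerivAt F (⟪μ t, G t (μ t)⟫_ℝ) t := by
    intro t
    rw [funext hF, ← heq1, hμ]
    exact hasDerivAt_quadratized_energy hLsym (D t) (hΦ t) (heq2 t ▸ hq t)
  have hdiss : ∀ t, ⟪μ t, G t (μ t)⟫_ℝ ≤ 0 := fun t => hG t (μ t)
  exact ⟨hF', hdiss, antitone_of_hasDerivAt_nonpos hF' hdiss⟩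
end
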